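/- arXiv:1612.09104 — 4 statements merged into one kernel-verified Lean document; each statement's English description precedes it below -/
import Mathlib

section
/- With φ_{h,d}(s) = ∑_{k=1}^{d-1} e(ks/d)/((1-e(kh/d))(1-e(-k/d))): if d is odd and divisible by 3 then φ_{h,d}(s) ∈ -h/3 + ℤ for every integer s; if d is even and not divisible by 3 then φ_{h,d}(s) ∈ (1+2s)/4 + ℤ; and if 6 divides d then φ_{h,d}(s) ∈ (1+2s)/4 - h/3 + ℤ. -/
/-- `e(x) = exp(2πi x)`. -/
noncomputable def ee (x : ℝ) : ℂ := Complex.exp (2 * Real.pi * Complex.I * x)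

/-- The generalized Dedekind sum
`φ_{h,d}(s) = ∑_{k=1}^{d-1} e(ks/d) / ((1 - e(kh/d)) (1 - e(-k/d)))`. -/
noncomputable def phi (h : ℤ) (d : ℕ) (s : ℤ) : ℂ :=
  ∑ k ∈ Finset.Ico 1 d,
    ee ((k : ℝ) * (s : ℝ) / d) /
      ((1 - ee ((k : ℝ) * (h : ℝ) / d)) * (1 - ee (-(k : ℝ) / d)))


lemma ee_add (x y : ℝ) : ee (x + y) = ee x * ee y := by
  rw [ee, ee, ee, ← Complex.exp_add]
  congr 1
  push_cast
  ring

lemma ee_zero : ee 0 = 1 := by simp [ee]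

lemma ee_eq_one_iff (x : ℝ) : ee x = 1 ↔ ∃ n : ℤ, x = n := by
  rw [ee, Complex.exp_eq_one_iff]
  constructor
  · rintro ⟨n, hn⟩
    refine ⟨n, ?_⟩
    have h2 : (2 * (Real.pi:ℂ) * Complex.I) ≠ 0 := by
      simp [Real.pi_ne_zero, Complex.I_ne_zero]
    have h3 : (x:ℂ) * (2 * (Real.pi:ℂ) * Complex.I) = (n:ℂ) * (2 * (Real.pi:ℂ) * Complex.I) := by
      rw [← hn]; ring
    have := mul_right_cancel₀ h2 h3
    exact_mod_cast this
  · rintro ⟨n, hn⟩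
    exact ⟨n, by rw [hn]; push_cast; ring⟩

noncomputable def zz (d : ℕ) (t : ℤ) : ℂ := ee ((t : ℝ) / d)

lemma zz_add (d : ℕ) (a b : ℤ) : zz d (a + b) = zz d a * zz d b := by
  rw [zz, zz, zz, ← ee_add]
  congr 1
  push_cast
  ring

lemma zz_zero (d : ℕ) : zz d 0 = 1 := by simp [zz, ee_zero]

lemma zz_eq_one_iff {d : ℕ} (hd : 0 < d) (t : ℤ) : zz d t = 1 ↔ (d : ℤ) ∣ t := by
  rw [zz, ee_eq_one_iff]
  constructor
  · rintro ⟨n, hn⟩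
    refine ⟨n, ?_⟩
    have hdne : (d : ℝ) ≠ 0 := by positivity
    have : (t : ℝ) = d * n := by
      field_simp at hn
      rw [hn]
    exact_mod_cast this
  · rintro ⟨n, hn⟩
    have hdne : (d : ℝ) ≠ 0 := by positivity
    refine ⟨n, ?_⟩
    rw [hn]
    push_cast
    field_simp

lemma zz_pow (d : ℕ) (t : ℤ) (n : ℕ) : zz d t ^ n = zz d (n * t) := by
  induction n with
  | zero => simp [zz_zero]
  | succ n ih =>
    rw [pow_succ, ih, ← zz_add]
    congr 1
    push_cast
    ring

lemma zz_mul_self (d : ℕ) (t : ℤ) : zz d t ^ d = 1 := by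
  rcases Nat.eq_zero_or_pos d with h | h
  · simp [h]
  · rw [zz_pow]
    rw [zz_eq_one_iff h]
    exact ⟨t, by push_cast; ring⟩

lemma sum_zz {d : ℕ} (hd : 0 < d) (t : ℤ) :
    ∑ k ∈ Finset.range d, zz d (k * t) = if (d : ℤ) ∣ t then (d : ℂ) else 0 := by
  have hrw : ∀ k : ℕ, zz d ((k : ℤ) * t) = zz d t ^ k := fun k => (zz_pow d t k).symm
  simp only [hrw]
  by_cases h : (d : ℤ) ∣ t
  · rw [if_pos h]
    have h1 : zz d t = 1 := (zz_eq_one_iff hd t).mpr h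
    simp [h1]
  · rw [if_neg h]
    have h1 : zz d t ≠ 1 := fun hc => h ((zz_eq_one_iff hd t).mp hc)
    rw [geom_sum_eq h1, zz_mul_self]
    simp

lemma wsum (w : ℂ) (n : ℕ) :
    (w - 1) * ∑ j ∈ Finset.range n, (j : ℂ) * w ^ j
      = ((n : ℂ) - 1) * w ^ n - (∑ j ∈ Finset.range n, w ^ j) + 1 := by
  induction n with
  | zero => simp
  | succ n ih =>
    rw [Finset.sum_range_succ, Finset.sum_range_succ (f := fun j => w ^ j)]
    push_cast
    ring_nf
    ring_nf at ih
    linear_combination ih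

lemma inv_sum {d : ℕ} (hd : 0 < d) {t : ℤ} (ht : ¬ (d : ℤ) ∣ t) :
    (1 - zz d t) * ∑ j ∈ Finset.range d, (j : ℂ) * zz d (j * t) = -(d : ℂ) := by
  have h1 : zz d t ≠ 1 := fun hc => ht ((zz_eq_one_iff hd t).mp hc)
  have hrw : ∀ j : ℕ, ((j : ℂ)) * zz d ((j : ℤ) * t) = (j : ℂ) * zz d t ^ j := by
    intro j; rw [zz_pow]
  simp only [hrw]
  have hw := wsum (zz d t) d
  have hg : ∑ j ∈ Finset.range d, zz d t ^ j = 0 := by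
    rw [geom_sum_eq h1, zz_mul_self]; simp
  rw [zz_mul_self, hg] at hw
  have : (1 - zz d t) * ∑ j ∈ Finset.range d, (j:ℂ) * zz d t ^ j
      = -((zz d t - 1) * ∑ j ∈ Finset.range d, (j:ℂ) * zz d t ^ j) := by ring
  rw [this, hw]
  ring

lemma phi_zz (h : ℤ) (d : ℕ) (s : ℤ) :
    phi h d s = ∑ k ∈ Finset.Ico 1 d,
      zz d (k * s) / ((1 - zz d (k * h)) * (1 - zz d (-(k:ℤ)))) := by
  apply Finset.sum_congr rfl
  intro k _
  simp only [zz]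
  congr 3
  · congr 1; push_cast; ring
  · congr 1; push_cast; ring
  · congr 1; push_cast; ring

lemma phi_formula (d : ℕ) (hd : 1 ≤ d) (h : ℤ) (hcop : Int.gcd h d = 1) (s : ℤ) :
    phi h d s =
      (∑ j ∈ Finset.range d, (j : ℂ) * ((((s + (j:ℤ) * h) % (d:ℤ)) : ℤ) : ℂ)) / d
        - ((d : ℂ) - 1) ^ 2 / 4 := by
  have hd0 : 0 < d := hd
  have hdC : (d : ℂ) ≠ 0 := Nat.cast_ne_zero.mpr (by omega)
  have hco : IsCoprime (d : ℤ) h := by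
    rw [Int.isCoprime_iff_gcd_eq_one, Int.gcd_comm]
    exact hcop
  -- step 1: rewrite each term using the weighted sums
  have step1 : phi h d s = (∑ k ∈ Finset.Ico 1 d, ∑ j ∈ Finset.range d,
      ∑ i ∈ Finset.range d,
        (j : ℂ) * (i : ℂ) * zz d ((k:ℤ) * (s + (j:ℤ) * h - (i:ℤ)))) / (d:ℂ)^2 := by
    rw [phi_zz, Finset.sum_div]
    apply Finset.sum_congr rfl
    intro k hk
    rw [Finset.mem_Ico] at hk
    have hndk : ¬ (d : ℤ) ∣ (k : ℤ) := by
      intro hdvd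
      have := Int.le_of_dvd (by exact_mod_cast hk.1) hdvd
      omega
    have hndkh : ¬ (d : ℤ) ∣ ((k:ℤ) * h) := fun hdvd =>
      hndk (hco.dvd_of_dvd_mul_right hdvd)
    have hndnk : ¬ (d : ℤ) ∣ (-(k:ℤ)) := fun hdvd => hndk ((dvd_neg).mp hdvd)
    have e1 := inv_sum hd0 hndkh
    have e2 := inv_sum hd0 hndnk
    set T1 := ∑ j ∈ Finset.range d, (j : ℂ) * zz d ((j:ℤ) * ((k:ℤ) * h)) with hT1
    set T2 := ∑ i ∈ Finset.range d, (i : ℂ) * zz d ((i:ℤ) * (-(k:ℤ))) with hT2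
    have hx1 : (1 - zz d ((k:ℤ) * h)) ≠ 0 := by
      rw [sub_ne_zero]
      exact fun hc => hndkh ((zz_eq_one_iff hd0 _).mp hc.symm)
    have hx2 : (1 - zz d (-(k:ℤ))) ≠ 0 := by
      rw [sub_ne_zero]
      exact fun hc => hndnk ((zz_eq_one_iff hd0 _).mp hc.symm)
    have main : zz d ((k:ℤ) * s) / ((1 - zz d ((k:ℤ) * h)) * (1 - zz d (-(k:ℤ))))
        = zz d ((k:ℤ) * s) * T1 * T2 / (d:ℂ)^2 := by
      rw [div_eq_div_iff (mul_ne_zero hx1 hx2) (pow_ne_zero 2 hdC)]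
      linear_combination (-(zz d ((k:ℤ)*s)) * T2 * (1 - zz d (-(k:ℤ)))) * e1
        + (zz d ((k:ℤ)*s) * (d:ℂ)) * e2
    rw [main]
    congr 1
    rw [hT1, hT2]
    simp only [Finset.mul_sum, Finset.sum_mul]
    rw [Finset.sum_comm]
    apply Finset.sum_congr rfl
    intro j _
    apply Finset.sum_congr rfl
    intro i _
    have hzz : zz d ((k:ℤ) * s) * zz d ((j:ℤ) * ((k:ℤ) * h)) * zz d ((i:ℤ) * (-(k:ℤ)))
        = zz d ((k:ℤ) * (s + (j:ℤ) * h - (i:ℤ))) := by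
      rw [← zz_add, ← zz_add]
      congr 1
      ring
    rw [← hzz]
    ring
  -- inner k-sum
  have hksum : ∀ u : ℤ, ∑ k ∈ Finset.Ico 1 d, zz d ((k:ℤ) * u)
      = (if (d:ℤ) ∣ u then (d:ℂ) else 0) - 1 := by
    intro u
    have h0 := sum_zz hd0 u
    rw [Finset.range_eq_Ico, Finset.sum_eq_sum_Ico_succ_bot hd0] at h0
    have h1 : zz d (((0:ℕ):ℤ) * u) = 1 := by
      norm_num [zz_zero]
    rw [h1] at h0
    linear_combination h0
  -- inner i-sum
  have hisum : ∀ j : ℕ, (∑ i ∈ Finset.range d,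
        (i:ℂ) * (if (d:ℤ) ∣ (s + (j:ℤ)*h - (i:ℤ)) then (d:ℂ) else 0))
      = (d:ℂ) * ((((s + (j:ℤ)*h) % (d:ℤ)):ℤ):ℂ) := by
    intro j
    set r : ℤ := (s + (j:ℤ)*h) % (d:ℤ) with hr
    have hdz : (d:ℤ) ≠ 0 := by exact_mod_cast (by omega : d ≠ 0)
    have hr0 : 0 ≤ r := Int.emod_nonneg _ hdz
    have hrd : r < d := Int.emod_lt_of_pos _ (by exact_mod_cast hd0)
    have hmem : r.toNat ∈ Finset.range d := Finset.mem_range.mpr (by omega)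
    rw [Finset.sum_eq_single_of_mem r.toNat hmem ?side]
    case side =>
      intro b hb hbne
      have hbd : (b:ℤ) < d := by exact_mod_cast Finset.mem_range.mp hb
      have hnd : ¬ (d:ℤ) ∣ (s + (j:ℤ)*h - (b:ℤ)) := by
        intro hdvd
        have hb0 : (0:ℤ) ≤ b := Int.ofNat_nonneg b
        have h1 : ((b:ℤ)) % (d:ℤ) = (s + (j:ℤ)*h) % (d:ℤ) := by
          rw [Int.emod_eq_emod_iff_emod_sub_eq_zero]
          have hdvd' : (d:ℤ) ∣ ((b:ℤ) - (s + (j:ℤ)*h)) := by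
            rw [show ((b:ℤ) - (s + (j:ℤ)*h)) = -(s + (j:ℤ)*h - (b:ℤ)) by ring]
            exact dvd_neg.mpr hdvd
          exact Int.emod_eq_zero_of_dvd hdvd'
        have h2 : ((b:ℤ)) % (d:ℤ) = b := Int.emod_eq_of_lt hb0 hbd
        apply hbne
        have hbr : (b:ℤ) = r := by rw [← h2, h1, hr]
        omega
      rw [if_neg hnd, mul_zero]
    · have hcond : (d:ℤ) ∣ (s + (j:ℤ)*h - (r.toNat:ℤ)) := by
        rw [Int.toNat_of_nonneg hr0, hr]
        refine ⟨(s + (j:ℤ)*h) / (d:ℤ), ?_⟩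
        rw [Int.emod_def]
        ring
      rw [if_pos hcond]
      have hc : ((r.toNat:ℕ):ℂ) = ((r:ℤ):ℂ) := by
        exact_mod_cast congrArg (Int.cast : ℤ → ℂ) (Int.toNat_of_nonneg hr0)
      rw [hc]
      ring
  -- assemble
  have key : (∑ k ∈ Finset.Ico 1 d, ∑ j ∈ Finset.range d, ∑ i ∈ Finset.range d,
      (j : ℂ) * (i : ℂ) * zz d ((k:ℤ) * (s + (j:ℤ) * h - (i:ℤ))))
      = (d:ℂ) * (∑ j ∈ Finset.range d, (j:ℂ) * ((((s + (j:ℤ)*h) % (d:ℤ)):ℤ):ℂ))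
        - (∑ i ∈ Finset.range d, (i:ℂ)) * (∑ j ∈ Finset.range d, (j:ℂ)) := by
    rw [Finset.sum_comm]
    have hj : ∀ j ∈ Finset.range d, (∑ k ∈ Finset.Ico 1 d, ∑ i ∈ Finset.range d,
        (j : ℂ) * (i : ℂ) * zz d ((k:ℤ) * (s + (j:ℤ) * h - (i:ℤ))))
        = (d:ℂ) * ((j:ℂ) * ((((s + (j:ℤ)*h) % (d:ℤ)):ℤ):ℂ))
          - (j:ℂ) * (∑ i ∈ Finset.range d, (i:ℂ)) := by
      intro j _
      rw [Finset.sum_comm]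
      have hi : ∀ i ∈ Finset.range d, (∑ k ∈ Finset.Ico 1 d,
          (j : ℂ) * (i : ℂ) * zz d ((k:ℤ) * (s + (j:ℤ) * h - (i:ℤ))))
          = (j:ℂ) * ((i:ℂ) * (if (d:ℤ) ∣ (s + (j:ℤ)*h - (i:ℤ)) then (d:ℂ) else 0))
            - (j:ℂ) * (i:ℂ) := by
        intro i _
        have : (∑ k ∈ Finset.Ico 1 d,
            (j : ℂ) * (i : ℂ) * zz d ((k:ℤ) * (s + (j:ℤ) * h - (i:ℤ))))
            = (j:ℂ) * (i:ℂ) * (∑ k ∈ Finset.Ico 1 d,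
              zz d ((k:ℤ) * (s + (j:ℤ) * h - (i:ℤ)))) := by
          rw [Finset.mul_sum]
        rw [this, hksum]
        ring
      rw [Finset.sum_congr rfl hi, Finset.sum_sub_distrib, ← Finset.mul_sum,
        ← Finset.mul_sum, hisum j]
      ring
    rw [Finset.sum_congr rfl hj, Finset.sum_sub_distrib, ← Finset.mul_sum,
      ← Finset.sum_mul]
  rw [step1, key]
  have hG : (∑ i ∈ Finset.range d, (i:ℂ)) * 2 = (d:ℂ) * ((d:ℂ) - 1) := by
    have h0 := Finset.sum_range_id_mul_two d
    have h2 : ((∑ i ∈ Finset.range d, i : ℕ) : ℂ) * 2 = ((d * (d-1) : ℕ):ℂ) := by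
      exact_mod_cast congrArg (Nat.cast : ℕ → ℂ) h0
    push_cast [Nat.cast_sub hd] at h2
    convert h2 using 2
  set G := ∑ i ∈ Finset.range d, (i:ℂ) with hGdef
  set Sc := ∑ j ∈ Finset.range d, (j:ℂ) * ((((s + (j:ℤ)*h) % (d:ℤ)):ℤ):ℂ) with hSc
  have hG2 : G = ((d:ℂ)^2 - (d:ℂ)) / 2 := by linear_combination hG / 2
  rw [hG2]
  field_simp
  ring

lemma gauss1 (n : ℕ) : 2 * ∑ j ∈ Finset.range n, (j:ℤ) = (n:ℤ) * ((n:ℤ) - 1) := by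
  induction n with
  | zero => simp
  | succ n ih =>
    rw [Finset.sum_range_succ]
    push_cast
    linear_combination ih

lemma gauss2 (n : ℕ) : 6 * ∑ j ∈ Finset.range n, (j:ℤ)^2
    = (n:ℤ) * ((n:ℤ) - 1) * (2*(n:ℤ) - 1) := by
  induction n with
  | zero => simp
  | succ n ih =>
    rw [Finset.sum_range_succ]
    push_cast
    linear_combination ih

lemma S_decomp' (d : ℕ) (h s : ℤ) : ∃ m : ℤ,
    12 * (∑ j ∈ Finset.range d, (j:ℤ) * ((s + (j:ℤ)*h) % (d:ℤ)))
      = (d:ℤ) * (6*s*((d:ℤ)-1) + 2*h*((d:ℤ)-1)*(2*(d:ℤ)-1)) + 12 * (d:ℤ) * m := by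
  refine ⟨-(∑ j ∈ Finset.range d, (j:ℤ) * ((s + (j:ℤ)*h) / (d:ℤ))), ?_⟩
  have hterm : ∀ j ∈ Finset.range d, (j:ℤ) * ((s + (j:ℤ)*h) % (d:ℤ))
      = ((j:ℤ)*s + ((j:ℤ)^2)*h) - (d:ℤ) * ((j:ℤ) * ((s + (j:ℤ)*h) / (d:ℤ))) := by
    intro j _
    rw [Int.emod_def]
    ring
  rw [Finset.sum_congr rfl hterm, Finset.sum_sub_distrib, ← Finset.mul_sum,
    Finset.sum_add_distrib, ← Finset.sum_mul, ← Finset.sum_mul]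
  linear_combination 6*s*(gauss1 d) + 2*h*(gauss2 d)

theorem phi_fractional_parts (d : ℕ) (hd : 1 ≤ d) (h : ℤ) (hcop : Int.gcd h d = 1) (s : ℤ) :
    (Odd d → 3 ∣ d → ∃ z : ℤ, phi h d s = -(h : ℂ) / 3 + (z : ℂ)) ∧
    (Even d → ¬ 3 ∣ d → ∃ z : ℤ, phi h d s = (1 + 2 * (s : ℂ)) / 4 + (z : ℂ)) ∧
    (6 ∣ d → ∃ z : ℤ, phi h d s = (1 + 2 * (s : ℂ)) / 4 - (h : ℂ) / 3 + (z : ℂ)) := by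
  have hco : IsCoprime ((d:ℕ):ℤ) h := by
    rw [Int.isCoprime_iff_gcd_eq_one, Int.gcd_comm]
    exact hcop
  obtain ⟨m, hm⟩ := S_decomp' d h s
  set A : ℤ := 6*s*((d:ℤ)-1) + 2*h*((d:ℤ)-1)*(2*(d:ℤ)-1) + 12*m - 3*((d:ℤ)-1)^2 with hA
  have hdC : (d:ℂ) ≠ 0 := Nat.cast_ne_zero.mpr (by omega)
  have hphiA : phi h d s = (A:ℂ) / 12 := by
    rw [phi_formula d hd h hcop s]
    have hSc : (∑ j ∈ Finset.range d, (j:ℂ) * ((((s + (j:ℤ)*h) % (d:ℤ)):ℤ):ℂ))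
        = ((∑ j ∈ Finset.range d, (j:ℤ) * ((s + (j:ℤ)*h) % (d:ℤ)) : ℤ):ℂ) := by
      push_cast
      rfl
    rw [hSc]
    have hmC : 12 * ((∑ j ∈ Finset.range d, (j:ℤ) * ((s + (j:ℤ)*h) % (d:ℤ)) : ℤ):ℂ)
        = (d:ℂ) * (6*(s:ℂ)*((d:ℂ)-1) + 2*(h:ℂ)*((d:ℂ)-1)*(2*(d:ℂ)-1))
          + 12*(d:ℂ)*(m:ℂ) := by
      have := congrArg (Int.cast : ℤ → ℂ) hm
      push_cast at this
      convert this using 2 <;> push_cast <;> ring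
    rw [hA]
    push_cast
    field_simp
    linear_combination (4:ℂ) * hmC + 48 * hSc
  have h2dvd : Even d → ∃ u : ℤ, h = 2*u + 1 := by
    intro heven
    have h2d : (2:ℤ) ∣ (d:ℤ) := by
      obtain ⟨r, hr⟩ := heven
      exact ⟨(r:ℤ), by exact_mod_cast by omega⟩
    have h2h : ¬ (2:ℤ) ∣ h := by
      intro hdvd
      have := hco.isUnit_of_dvd' h2d hdvd
      rw [Int.isUnit_iff] at this
      omega
    exact ⟨h/2, by omega⟩
  refine ⟨?_, ?_, ?_⟩
  · intro hodd h3
    obtain ⟨r, hr⟩ := hodd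
    obtain ⟨t, ht⟩ : ∃ t : ℕ, d = 6*t + 3 := ⟨d/6, by omega⟩
    have hdZ : (d:ℤ) = 6*(t:ℤ) + 3 := by exact_mod_cast by omega
    refine ⟨3*s*(t:ℤ) + s + 12*h*(t:ℤ)^2 + 9*h*(t:ℤ) + 2*h - 9*(t:ℤ)^2 - 6*(t:ℤ) - 1 + m, ?_⟩
    have hAz : A = 12*(3*s*(t:ℤ) + s + 12*h*(t:ℤ)^2 + 9*h*(t:ℤ) + 2*h - 9*(t:ℤ)^2
        - 6*(t:ℤ) - 1 + m) - 4*h := by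
      rw [hA, hdZ]; ring
    rw [hphiA, hAz]
    push_cast
    ring
  · intro heven h3
    obtain ⟨u, hu⟩ := h2dvd heven
    obtain ⟨r, hr⟩ := heven
    have h6 : d % 6 = 2 ∨ d % 6 = 4 := by omega
    rcases h6 with h6 | h6
    · obtain ⟨t, ht⟩ : ∃ t : ℕ, d = 6*t + 2 := ⟨d/6, by omega⟩
      have hdZ : (d:ℤ) = 6*(t:ℤ) + 2 := by exact_mod_cast by omega
      refine ⟨3*s*(t:ℤ) + 12*h*(t:ℤ)^2 + 10*u*(t:ℤ) + 2*(t:ℤ) + u - 9*(t:ℤ)^2 + m, ?_⟩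
      have hAz : A = 12*(3*s*(t:ℤ) + 12*h*(t:ℤ)^2 + 10*u*(t:ℤ) + 2*(t:ℤ) + u
          - 9*(t:ℤ)^2 + m) + (3 + 6*s) := by
        rw [hA, hdZ, hu]; ring
      rw [hphiA, hAz]
      push_cast
      ring
    · obtain ⟨t, ht⟩ : ∃ t : ℕ, d = 6*t + 4 := ⟨d/6, by omega⟩
      have hdZ : (d:ℤ) = 6*(t:ℤ) + 4 := by exact_mod_cast by omega
      refine ⟨3*s*(t:ℤ) + s + 12*h*(t:ℤ)^2 + 13*h*(t:ℤ) + 7*u + 1 - 9*(t:ℤ)^2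
        - 9*(t:ℤ) + m, ?_⟩
      have hAz : A = 12*(3*s*(t:ℤ) + s + 12*h*(t:ℤ)^2 + 13*h*(t:ℤ) + 7*u + 1
          - 9*(t:ℤ)^2 - 9*(t:ℤ) + m) + (3 + 6*s) := by
        rw [hA, hdZ, hu]; ring
      rw [hphiA, hAz]
      push_cast
      ring
  · intro h6
    have heven : Even d := by
      obtain ⟨r, hr⟩ := h6
      exact ⟨3*r, by omega⟩
    obtain ⟨u, hu⟩ := h2dvd heven
    obtain ⟨t, ht⟩ : ∃ t : ℕ, d = 6*t := ⟨d/6, by omega⟩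
    have hdZ : (d:ℤ) = 6*(t:ℤ) := by exact_mod_cast by omega
    refine ⟨3*s*(t:ℤ) - s + 12*h*(t:ℤ)^2 - 3*h*(t:ℤ) + u - 9*(t:ℤ)^2 + 3*(t:ℤ) + m, ?_⟩
    have hAz : A = 12*(3*s*(t:ℤ) - s + 12*h*(t:ℤ)^2 - 3*h*(t:ℤ) + u - 9*(t:ℤ)^2
        + 3*(t:ℤ) + m) + (3 + 6*s - 4*h) := by
      rw [hA, hdZ, hu]; ring
    rw [hphiA, hAz]
    push_cast
    ring
end

section
/- With φ_{h,d}(s) = ∑_{k=1}^{d-1} e(ks/d)/((1-e(kh/d))(1-e(-k/d))), for every integer s with 0 ≤ s ≤ d-1 one has φ_{h,d}(s+h) = φ_{h,d}(s) + s - (d-1)/2. -/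
/-!
Write ω = e(1/d), a primitive d-th root of unity, so that e(m/d) = ω^m. Replacing s by s + h
multiplies the k-th numerator by ω^{kh}, and ω^{kh} - 1 cancels the factor 1 - ω^{kh}
(nonzero because gcd(h, d) = 1); hence φ(s + h) - φ(s) = -S(s) with
S(s) = ∑_{k=1}^{d-1} ω^{ks} / (1 - ω^{-k}). Likewise S(s + 1) - S(s) = ∑_{k=1}^{d-1} ω^{k(s+1)},
a full geometric sum of a nontrivial d-th root of unity minus its constant term, i.e. -1 when
d ∤ s + 1. Pairing k with d - k gives 2 S(0) = d - 1, so S(s) = (d - 1)/2 - s for 0 ≤ s < d.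
-/

open Finset

section RootsOfUnity

variable {K : Type*} [Field K]

theorem sum_Ico_one_pow_eq_neg_one_of_pow_eq_one {v : K} {d : ℕ} (hd : 0 < d)
    (hvd : v ^ d = 1) (hv : v ≠ 1) : ∑ k ∈ Ico 1 d, v ^ k = -1 := by
  have hgeom : ∑ k ∈ range d, v ^ k = 0 := by rw [geom_sum_eq hv, hvd, sub_self, zero_div]
  rw [range_eq_Ico, sum_eq_sum_Ico_succ_bot hd, pow_zero] at hgeom
  exact eq_neg_of_add_eq_zero_right hgeom

theorem one_div_one_sub_inv_add_one_div_one_sub {v : K} (hv0 : v ≠ 0) (hv1 : v ≠ 1) :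
    1 / (1 - v⁻¹) + 1 / (1 - v) = 1 := by
  have : 1 - v ≠ 0 := sub_ne_zero.mpr hv1.symm
  have : v - 1 ≠ 0 := sub_ne_zero.mpr hv1
  field_simp
  ring

def sawtoothSum (ω : K) (d : ℕ) (s : ℤ) : K :=
  ∑ k ∈ Ico 1 d, ω ^ ((k : ℤ) * s) / (1 - ω ^ (-(k : ℤ)))

def rootPhi (ω : K) (h : ℤ) (d : ℕ) (s : ℤ) : K :=
  ∑ k ∈ Ico 1 d, ω ^ ((k : ℤ) * s) / ((1 - ω ^ ((k : ℤ) * h)) * (1 - ω ^ (-(k : ℤ))))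

namespace IsPrimitiveRoot

variable {ω : K} {d : ℕ}

theorem pow_ne_one_of_mem_Ico (hω : IsPrimitiveRoot ω d) {k : ℕ} (hk : k ∈ Ico 1 d) :
    ω ^ k ≠ 1 := by
  rw [mem_Ico] at hk
  exact hω.pow_ne_one_of_pos_of_lt (by omega) hk.2

theorem one_sub_zpow_neg_ne_zero (hω : IsPrimitiveRoot ω d) {k : ℕ} (hk : k ∈ Ico 1 d) :
    1 - ω ^ (-(k : ℤ)) ≠ 0 := by
  rw [sub_ne_zero, ne_comm, zpow_neg, zpow_natCast, inv_ne_one]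
  exact hω.pow_ne_one_of_mem_Ico hk

theorem one_sub_zpow_mul_ne_zero (hω : IsPrimitiveRoot ω d) {h : ℤ} (hcop : IsCoprime (d : ℤ) h)
    {k : ℕ} (hk : k ∈ Ico 1 d) : 1 - ω ^ ((k : ℤ) * h) ≠ 0 := by
  rw [sub_ne_zero, ne_comm, Ne, hω.zpow_eq_one_iff_dvd]
  intro hdvd
  have : d ∣ k := Int.natCast_dvd_natCast.mp (hcop.dvd_of_dvd_mul_right hdvd)
  rw [mem_Ico] at hk
  exact absurd (Nat.le_of_dvd (by omega) this) (by omega)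

theorem two_mul_sawtoothSum_zero (hω : IsPrimitiveRoot ω d) (hd : 0 < d) :
    2 * sawtoothSum ω d 0 = d - 1 := by
  have hreflect : sawtoothSum ω d 0 = ∑ k ∈ Ico 1 d, 1 / (1 - ω ^ k) := by
    have h := sum_Ico_reflect (fun j => 1 / (1 - ω ^ j)) 1 (by omega : d ≤ d + 1)
    rw [show d + 1 - d = 1 by omega, Nat.add_sub_cancel] at h
    rw [sawtoothSum, ← h]
    refine sum_congr rfl fun k hk => ?_
    have hkd : k ≤ d := (mem_Ico.mp hk).2.le
    have hinv : ω ^ (d - k) = (ω ^ k)⁻¹ :=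
      eq_inv_of_mul_eq_one_left (by rw [← pow_add, Nat.sub_add_cancel hkd, hω.pow_eq_one])
    rw [mul_zero, zpow_zero, zpow_neg, zpow_natCast, hinv]
  have hpair : ∀ k ∈ Ico 1 d, 1 / (1 - ω ^ (-(k : ℤ))) + 1 / (1 - ω ^ k) = 1 := fun k hk => by
    rw [zpow_neg, zpow_natCast]
    exact one_div_one_sub_inv_add_one_div_one_sub (pow_ne_zero _ (hω.ne_zero hd.ne'))
      (hω.pow_ne_one_of_mem_Ico hk)
  calc 2 * sawtoothSum ω d 0
      = ∑ k ∈ Ico 1 d, (1 / (1 - ω ^ (-(k : ℤ))) + 1 / (1 - ω ^ k)) := by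
        rw [two_mul]
        nth_rw 2 [hreflect]
        simp only [sawtoothSum, mul_zero, zpow_zero, sum_add_distrib]
    _ = d - 1 := by
        rw [sum_congr rfl hpair, sum_const, Nat.card_Ico, nsmul_one, Nat.cast_sub hd]
        norm_num

theorem sawtoothSum_add_one (hω : IsPrimitiveRoot ω d) (hd : 0 < d) {s : ℤ}
    (hs : ¬ (d : ℤ) ∣ s + 1) : sawtoothSum ω d (s + 1) = sawtoothSum ω d s - 1 := by
  have hterm : ∀ k ∈ Ico 1 d, ω ^ ((k : ℤ) * (s + 1)) / (1 - ω ^ (-(k : ℤ))) -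
      ω ^ ((k : ℤ) * s) / (1 - ω ^ (-(k : ℤ))) = (ω ^ (s + 1)) ^ k := by
    intro k hk
    have hω0 : ω ≠ 0 := hω.ne_zero hd.ne'
    rw [div_sub_div_same, div_eq_iff (hω.one_sub_zpow_neg_ne_zero hk), ← zpow_natCast,
      ← zpow_mul, mul_comm (s + 1), mul_sub, mul_one, ← zpow_add₀ hω0]
    ring_nf
  have hgeom := sum_Ico_one_pow_eq_neg_one_of_pow_eq_one hd
    (by rw [← zpow_natCast, ← zpow_mul, mul_comm, zpow_mul, zpow_natCast, hω.pow_eq_one, one_zpow])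
    (by rwa [Ne, hω.zpow_eq_one_iff_dvd] : ω ^ (s + 1) ≠ 1)
  rw [← sum_congr rfl hterm, sum_sub_distrib] at hgeom
  rw [sawtoothSum, sawtoothSum]
  linear_combination hgeom

theorem two_mul_sawtoothSum_of_lt (hω : IsPrimitiveRoot ω d) {s : ℤ} (hs0 : 0 ≤ s)
    (hsd : s < d) : 2 * sawtoothSum ω d s = d - 1 - 2 * s := by
  have hd : 0 < d := by omega
  induction s, hs0 using Int.leInduction with
  | base => simpa using hω.two_mul_sawtoothSum_zero hd
  | succ s hs0 ih =>
    have hs : ¬ (d : ℤ) ∣ s + 1 := fun hdvd => by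
      have := Int.le_of_dvd (by omega) hdvd
      omega
    rw [hω.sawtoothSum_add_one hd hs, mul_sub, ih (by omega)]
    push_cast
    ring

theorem rootPhi_add (hω : IsPrimitiveRoot ω d) {h : ℤ} (hcop : IsCoprime (d : ℤ) h) (s : ℤ) :
    rootPhi ω h d (s + h) = rootPhi ω h d s - sawtoothSum ω d s := by
  rw [rootPhi, rootPhi, sawtoothSum, ← sum_sub_distrib]
  refine sum_congr rfl fun k hk => ?_
  have hu := hω.one_sub_zpow_mul_ne_zero hcop hk
  have hw := hω.one_sub_zpow_neg_ne_zero hk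
  have hd : d ≠ 0 := Nat.ne_zero_of_lt (mem_Ico.mp hk).2
  rw [mul_add, zpow_add₀ (hω.ne_zero hd)]
  field_simp
  ring

end IsPrimitiveRoot

end RootsOfUnity

theorem ee_intCast_div (m : ℤ) (d : ℕ) :
    ee (m / d) = Complex.exp (2 * Real.pi * Complex.I / d) ^ m := by
  rw [ee, ← Complex.exp_int_mul]
  push_cast
  ring_nf

theorem phi_eq_rootPhi (h : ℤ) (d : ℕ) (s : ℤ) :
    phi h d s = rootPhi (Complex.exp (2 * Real.pi * Complex.I / d)) h d s := by
  refine sum_congr rfl fun k _ => ?_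
  simp only [← ee_intCast_div]
  push_cast
  ring_nf

theorem phi_shift_general (d : ℕ) (h : ℤ) (hcop : Int.gcd h d = 1)
    (s : ℤ) (hs0 : 0 ≤ s) (hsd : s < d) :
    phi h d (s + h) = phi h d s + (s : ℂ) - ((d : ℂ) - 1) / 2 := by
  have hω := Complex.isPrimitiveRoot_exp d (by omega)
  have hcop' : IsCoprime (d : ℤ) h := Int.isCoprime_iff_gcd_eq_one.mpr (by rwa [Int.gcd_comm])
  rw [phi_eq_rootPhi, phi_eq_rootPhi, hω.rootPhi_add hcop']
  linear_combination (-1 / 2 : ℂ) * hω.two_mul_sawtoothSum_of_lt hs0 hsd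

theorem phi_shift (d : ℕ) (hd : 1 ≤ d) (h : ℤ) (hcop : Int.gcd h d = 1)
    (s : ℤ) (hs0 : 0 ≤ s) (hsd : s < d) :
    phi h d (s + h) = phi h d s + (s : ℂ) - ((d : ℂ) - 1) / 2 :=
  phi_shift_general d h hcop s hs0 hsd
end

section
/- With φ_{h,d} as above and 1 ≤ h < d, 0 ≤ s < d, the reciprocity-type recursion φ_{h,d}(s) = (d² + h² + 3hd - 3d - 3h + 1 - 6s(d+h-1-s))/(12h) - (d/h)·φ_{d mod h, h}(s mod h) holds, where in the last term d and s are replaced by their residues modulo h. -/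
/-!
For a `d`-th root of unity `w ≠ 1` one has `1 / (1 - w) = -(1/d) ∑_{j<d} j w^j`. Expanding both
denominators this way and summing over `k` by orthogonality of the characters `k ↦ e(k m / d)`
gives `φ_{h,d}(s) = S(h,d,s)/d - (d-1)²/4` with the integer
`S(h,d,s) = ∑_{a<d} a ((h a + s) mod d)`.

Reciprocity for `S` is elementary. Writing the residue as `h a + s - d ⌊(h a + s)/d⌋`, the
floor sum `∑_a a ⌊(h a + s)/d⌋` is a weighted count of the lattice points
`(a, b) ∈ [0,d) × [0,h)` with `h d ≤ h a + d b + s`. Counting them by columns instead produces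
the floors `⌊(d b + s)/h⌋`; their residues `(d b + s) mod h` run over `[0, h)` since
`gcd(d, h) = 1`, and what is left is `S(d,h,s)`.
-/

open Finset

section SumsOfPowers

variable {R : Type*} [CommRing R]

theorem sum_range_natCast_mul_two (n : ℕ) : (∑ i ∈ range n, (i : R)) * 2 = n * (n - 1) := by
  induction n with
  | zero => simp
  | succ n ih => rw [sum_range_succ, add_mul, ih]; push_cast; ring

theorem sum_range_natCast_sq_mul_six (n : ℕ) :
    (∑ i ∈ range n, (i : R) ^ 2) * 6 = n * (n - 1) * (2 * n - 1) := by
  induction n with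
  | zero => simp
  | succ n ih => rw [sum_range_succ, add_mul, ih]; push_cast; ring

theorem one_sub_mul_sum_range_natCast_mul_pow (z : R) (n : ℕ) :
    (1 - z) * ∑ j ∈ range n, (j : R) * z ^ j =
      ∑ j ∈ range n, z ^ j - 1 - (n - 1) * z ^ n := by
  induction n with
  | zero => simp
  | succ n ih => rw [sum_range_succ, mul_add, ih, sum_range_succ]; push_cast; ring

end SumsOfPowers

section RootsOfUnity

variable {K : Type*} [Field K]

theorem inv_one_sub_eq_of_pow_eq_one {z : K} {n : ℕ} (hzn : z ^ n = 1) (hz : z ≠ 1)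
    (hn : (n : K) ≠ 0) : (1 - z)⁻¹ = -(∑ j ∈ range n, (j : K) * z ^ j) / n := by
  have hgeom : ∑ j ∈ range n, z ^ j = 0 := by rw [geom_sum_eq hz n, hzn, sub_self, zero_div]
  have h := one_sub_mul_sum_range_natCast_mul_pow z n
  rw [hgeom, hzn] at h
  rw [eq_div_iff hn, inv_mul_eq_iff_eq_mul₀ (sub_ne_zero.2 hz.symm)]
  linear_combination h

theorem zpow_div_one_sub_mul_one_sub_eq_sum {w : K} {n : ℕ} (hwn : w ^ n = 1) (hw : w ≠ 1)
    {h : ℤ} (hwh : w ^ h ≠ 1) (hn : (n : K) ≠ 0) (s : ℤ) :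
    w ^ s / ((1 - w ^ h) * (1 - w⁻¹)) =
      ∑ a ∈ range n, ∑ b ∈ range n, (a * b : K) * w ^ (h * a + s - b) / n ^ 2 := by
  have hw0 : w ≠ 0 := by
    rintro rfl
    rw [zero_pow (by rintro rfl; simp at hn)] at hwn
    exact zero_ne_one hwn
  have hwhn : (w ^ h) ^ n = 1 := by
    rw [← zpow_natCast, ← zpow_mul, mul_comm, zpow_mul, zpow_natCast, hwn, one_zpow]
  have hwin : w⁻¹ ^ n = 1 := by rw [inv_pow, hwn, inv_one]
  rw [div_eq_mul_inv, mul_inv, inv_one_sub_eq_of_pow_eq_one hwhn hwh hn,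
    inv_one_sub_eq_of_pow_eq_one hwin (inv_ne_one.2 hw) hn, div_mul_div_comm, neg_mul_neg,
    sum_mul_sum, mul_div_assoc', mul_sum, sum_div]
  refine sum_congr rfl fun a _ => ?_
  rw [mul_sum, sum_div]
  refine sum_congr rfl fun b _ => ?_
  rw [← zpow_natCast, ← zpow_mul, inv_pow, ← zpow_natCast w b, ← zpow_neg, sq,
    show h * a + s - b = s + h * a + -(b : ℤ) by ring, zpow_add₀ hw0, zpow_add₀ hw0]
  ring

theorem IsPrimitiveRoot.sum_Ico_zpow_eq {ζ : K} {n : ℕ} (hζ : IsPrimitiveRoot ζ n) (hn : 0 < n)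
    (m : ℤ) : ∑ k ∈ Ico 1 n, (ζ ^ k) ^ m = (if (n : ℤ) ∣ m then (n : K) else 0) - 1 := by
  have hrange : ∑ k ∈ range n, (ζ ^ k) ^ m = if (n : ℤ) ∣ m then (n : K) else 0 := by
    have hpow : ∀ k : ℕ, (ζ ^ k) ^ m = (ζ ^ m) ^ k := fun k => by
      rw [← zpow_natCast, ← zpow_mul, mul_comm, zpow_mul, zpow_natCast]
    simp_rw [hpow]
    split_ifs with hdvd
    · simp [(hζ.zpow_eq_one_iff_dvd m).2 hdvd]
    · have hne : ζ ^ m ≠ 1 := fun h => hdvd ((hζ.zpow_eq_one_iff_dvd m).1 h)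
      rw [geom_sum_eq hne, ← zpow_natCast, ← zpow_mul, mul_comm, zpow_mul, hζ.zpow_eq_one,
        one_zpow, sub_self, zero_div]
  rw [← hrange, range_eq_Ico, sum_eq_sum_Ico_succ_bot hn]
  simp

end RootsOfUnity

theorem filter_range_dvd_sub_eq {n : ℕ} (hn : 0 < n) (m : ℤ) :
    (range n).filter (fun b : ℕ => (n : ℤ) ∣ m - b) = {(m % n).toNat} := by
  have h0 : 0 ≤ m % n := Int.emod_nonneg m (by omega)
  have h1 : m % n < n := Int.emod_lt_of_pos m (by omega)
  ext b
  simp only [mem_filter, mem_range, mem_singleton, ← Int.modEq_iff_dvd, Int.ModEq]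
  constructor
  · rintro ⟨hb, hbm⟩
    rw [Int.emod_eq_of_lt (by omega) (by omega)] at hbm
    omega
  · rintro rfl
    exact ⟨by omega, by rw [Int.toNat_of_nonneg h0, Int.emod_emod]⟩

theorem sum_range_mul_ite_dvd_sub {R : Type*} [CommRing R] {n : ℕ} (hn : 0 < n) (m : ℤ) :
    ∑ b ∈ range n, (b : R) * (if (n : ℤ) ∣ m - b then (n : R) else 0) =
      n * (m % n : ℤ) := by
  have hcast : (((m % n).toNat : ℤ) : R) = ((m % n : ℤ) : R) := by
    rw [Int.toNat_of_nonneg (Int.emod_nonneg m (by omega))]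
  simp_rw [mul_ite, mul_zero]
  rw [← sum_filter, filter_range_dvd_sub_eq hn, sum_singleton, ← hcast, Int.cast_natCast,
    mul_comm]

def remainderSum (h : ℤ) (d : ℕ) (s : ℤ) : ℤ :=
  ∑ a ∈ range d, a * ((h * a + s) % d)

theorem IsPrimitiveRoot.sum_Ico_zpow_div_eq_remainderSum {K : Type*} [Field K] [CharZero K]
    {ζ : K} {d : ℕ} (hζ : IsPrimitiveRoot ζ d) (hd : 0 < d) {h : ℤ} (hh : IsCoprime h d)
    (s : ℤ) :
    ∑ k ∈ Ico 1 d, (ζ ^ k) ^ s / ((1 - (ζ ^ k) ^ h) * (1 - (ζ ^ k)⁻¹)) =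
      remainderSum h d s / d - (d - 1) ^ 2 / 4 := by
  have hdK : (d : K) ≠ 0 := Nat.cast_ne_zero.2 hd.ne'
  have hterm : ∀ k ∈ Ico 1 d, (ζ ^ k) ^ s / ((1 - (ζ ^ k) ^ h) * (1 - (ζ ^ k)⁻¹)) =
      ∑ a ∈ range d, ∑ b ∈ range d, (a * b : K) * (ζ ^ k) ^ (h * a + s - b) / d ^ 2 := by
    intro k hk
    obtain ⟨hk1, hkd⟩ := mem_Ico.1 hk
    have hk : ¬ (d : ℤ) ∣ k := fun hdvd => by have := Int.le_of_dvd (by omega) hdvd; omega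
    refine zpow_div_one_sub_mul_one_sub_eq_sum ?_ ?_ ?_ hdK s
    · rw [← pow_mul, mul_comm, pow_mul, hζ.pow_eq_one, one_pow]
    · exact fun h1 => hk (by exact_mod_cast (hζ.pow_eq_one_iff_dvd k).1 h1)
    · rw [← zpow_natCast, ← zpow_mul, Ne, hζ.zpow_eq_one_iff_dvd]
      exact fun hdvd => hk (hh.symm.dvd_of_dvd_mul_right hdvd)
  have hgauss : ∑ i ∈ range d, (i : K) = d * (d - 1) / 2 := by
    linear_combination sum_range_natCast_mul_two (R := K) d / 2
  calc _ = ∑ k ∈ Ico 1 d, ∑ a ∈ range d, ∑ b ∈ range d,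
        (a * b : K) * (ζ ^ k) ^ (h * a + s - b) / d ^ 2 := sum_congr rfl hterm
    _ = ∑ a ∈ range d, ∑ b ∈ range d,
        (a * b : K) * ((if (d : ℤ) ∣ h * a + s - b then (d : K) else 0) - 1) / d ^ 2 := by
      rw [sum_comm]
      refine sum_congr rfl fun a _ => ?_
      rw [sum_comm]
      refine sum_congr rfl fun b _ => ?_
      rw [← hζ.sum_Ico_zpow_eq hd, mul_sum, sum_div]
    _ = ∑ a ∈ range d,
        (a : K) * (d * ((h * a + s) % d : ℤ) - ∑ b ∈ range d, (b : K)) / d ^ 2 := by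
      refine sum_congr rfl fun a _ => ?_
      rw [← sum_div, ← sum_range_mul_ite_dvd_sub hd, mul_sub, mul_sum, mul_sum,
        ← sum_sub_distrib]
      congr 1
      exact sum_congr rfl fun b _ => by ring
    _ = (d * ∑ a ∈ range d, (a : K) * ((h * a + s) % d : ℤ)
          - (∑ a ∈ range d, (a : K)) * ∑ b ∈ range d, (b : K)) / d ^ 2 := by
      rw [← sum_div, mul_sum, sum_mul, ← sum_sub_distrib]
      congr 1
      exact sum_congr rfl fun a _ => by ring
    _ = _ := by
      rw [remainderSum, hgauss]
      push_cast
      field_simp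
      ring

theorem ee_natCast_mul_intCast_div (k : ℕ) (x : ℤ) (d : ℕ) :
    ee (k * x / d) = (Complex.exp (2 * Real.pi * Complex.I / d) ^ k) ^ x := by
  rw [ee, ← zpow_natCast, ← zpow_mul, ← Complex.exp_int_mul]
  congr 1
  push_cast
  ring

theorem phi_eq_remainderSum (h : ℤ) {d : ℕ} (hd : 0 < d) (hh : IsCoprime h d) (s : ℤ) :
    phi h d s = remainderSum h d s / d - (d - 1) ^ 2 / 4 := by
  rw [← (Complex.isPrimitiveRoot_exp d hd.ne').sum_Ico_zpow_div_eq_remainderSum hd hh s, phi]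
  refine sum_congr rfl fun k _ => ?_
  rw [show -(k : ℝ) / d = k * ((-1 : ℤ) : ℝ) / d by push_cast; ring,
    ee_natCast_mul_intCast_div, ee_natCast_mul_intCast_div, ee_natCast_mul_intCast_div,
    zpow_neg_one]

theorem remainderSum_emod (h : ℤ) (d : ℕ) (s : ℤ) :
    remainderSum (h % d) d (s % d) = remainderSum h d s := by
  simp only [remainderSum, Int.add_emod (h % d * _), Int.mul_emod (h % d), Int.emod_emod]
  simp only [← Int.mul_emod, ← Int.add_emod]

theorem remainderSum_eq_sub_ediv (h : ℤ) (d : ℕ) (s : ℤ) :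
    remainderSum h d s = h * ∑ a ∈ range d, (a : ℤ) ^ 2 + s * ∑ a ∈ range d, (a : ℤ)
      - d * ∑ a ∈ range d, a * ((h * a + s) / d) := by
  simp only [remainderSum, Int.emod_def, mul_sum, ← sum_add_distrib, ← sum_sub_distrib]
  exact sum_congr rfl fun a _ => by ring

theorem filter_range_le_add_eq_Ico {n : ℕ} {q : ℤ} (hq0 : 0 ≤ q) (hqn : q ≤ n) :
    (range n).filter (fun b : ℕ => (n : ℤ) ≤ b + q) = Ico (n - q.toNat) n := by
  ext b
  simp only [mem_filter, mem_range, mem_Ico]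
  omega

theorem card_filter_range_le_add {n : ℕ} {q : ℤ} (hq0 : 0 ≤ q) (hqn : q ≤ n) :
    (((range n).filter (fun b : ℕ => (n : ℤ) ≤ b + q)).card : ℤ) = q := by
  rw [filter_range_le_add_eq_Ico hq0 hqn, Nat.card_Ico]
  omega

theorem two_mul_sum_filter_range_le_add {n : ℕ} {q : ℤ} (hq0 : 0 ≤ q) (hqn : q ≤ n) :
    2 * ∑ b ∈ (range n).filter (fun b : ℕ => (n : ℤ) ≤ b + q), (b : ℤ) =
      q * (2 * n - 1 - q) := by
  have hm : ((n - q.toNat : ℕ) : ℤ) = n - q := by omega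
  have hn := sum_range_natCast_mul_two (R := ℤ) n
  have hm2 := sum_range_natCast_mul_two (R := ℤ) (n - q.toNat)
  rw [hm] at hm2
  rw [filter_range_le_add_eq_Ico hq0 hqn, sum_Ico_eq_sub _ (by omega)]
  linear_combination hn - hm2

theorem le_add_ediv_iff {c : ℤ} (hc : 0 < c) (n b x : ℤ) :
    n ≤ b + x / c ↔ n * c ≤ b * c + x := by
  rw [← sub_le_iff_le_add', Int.le_ediv_iff_mul_le hc, sub_mul, sub_le_iff_le_add']

theorem ediv_nonneg_and_le {d h : ℕ} (hd : 0 < d) {s : ℤ} (hs0 : 0 ≤ s) (hs : s < d + h)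
    {a : ℕ} (ha : a < d) : 0 ≤ (h * a + s) / d ∧ (h * a + s) / d ≤ h := by
  refine ⟨Int.ediv_nonneg (by positivity) (by omega), Int.lt_add_one_iff.1 ?_⟩
  rw [Int.ediv_lt_iff_lt_mul (by omega)]
  have : (h : ℤ) * a ≤ h * (d - 1) := mul_le_mul_of_nonneg_left (by omega) (by omega)
  nlinarith

theorem two_mul_sum_range_mul_ediv {d h : ℕ} (hd : 0 < d) (hh : 0 < h) {s : ℤ} (hs0 : 0 ≤ s)
    (hs : s < d + h) :
    2 * ∑ a ∈ range d, (a : ℤ) * ((h * a + s) / d) =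
      ∑ b ∈ range h, (d * b + s) / h * (2 * d - 1 - (d * b + s) / h) := by
  have hrow : ∀ a ∈ range d, (a : ℤ) * ((h * a + s) / d) =
      ∑ b ∈ range h, if (h * d : ℤ) ≤ h * a + d * b + s then (a : ℤ) else 0 := by
    intro a ha
    obtain ⟨hq0, hqh⟩ := ediv_nonneg_and_le hd hs0 hs (mem_range.1 ha)
    rw [← sum_filter, sum_const, nsmul_eq_mul, mul_comm, ← card_filter_range_le_add hq0 hqh]
    congr 3
    exact filter_congr fun b _ => by
      rw [le_add_ediv_iff (by omega)]; constructor <;> intro <;> linarith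
  have hcol : ∀ b ∈ range h,
      2 * ∑ a ∈ range d, (if (h * d : ℤ) ≤ h * a + d * b + s then (a : ℤ) else 0) =
        (d * b + s) / h * (2 * d - 1 - (d * b + s) / h) := by
    intro b hb
    obtain ⟨hq0, hqd⟩ := ediv_nonneg_and_le (h := d) hh hs0 (by omega) (mem_range.1 hb)
    rw [← sum_filter, ← two_mul_sum_filter_range_le_add hq0 hqd]
    congr 2
    exact filter_congr fun a _ => by
      rw [le_add_ediv_iff (by omega)]; constructor <;> intro <;> linarith
  rw [sum_congr rfl hrow, sum_comm, mul_sum]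
  exact sum_congr rfl hcol

theorem sum_range_emod_affine {M : Type*} [AddCommMonoid M] {n : ℕ} {c : ℤ}
    (hc : IsCoprime c n) (s : ℤ) (f : ℤ → M) :
    ∑ b ∈ range n, f ((c * b + s) % n) = ∑ j ∈ range n, f j := by
  let g : ℕ → ℕ := fun b => ((c * b + s) % n).toNat
  have hg : ∀ b ∈ range n, (g b : ℤ) = (c * b + s) % n ∧ g b < n := fun b hb => by
    have := Int.emod_nonneg (c * b + s) (b := n) (by have := mem_range.1 hb; omega)
    have := Int.emod_lt_of_pos (c * b + s) (b := n) (by have := mem_range.1 hb; omega)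
    simp only [g]
    omega
  have hinj : Set.InjOn g (range n) := by
    intro b₁ hb₁ b₂ hb₂ heq
    have hmod : c * b₁ + s ≡ c * b₂ + s [ZMOD n] := by
      rw [Int.ModEq, ← (hg b₁ hb₁).1, ← (hg b₂ hb₂).1, heq]
    have hdvd : (n : ℤ) ∣ c * (b₂ - b₁) := by
      rw [mul_sub]; exact Int.modEq_iff_dvd.1 (hmod.add_right_cancel' s)
    have hb := Int.eq_zero_of_abs_lt_dvd (hc.symm.dvd_of_dvd_mul_left hdvd)
      (by rw [abs_lt]; have := mem_range.1 hb₁; have := mem_range.1 hb₂; constructor <;> omega)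
    omega
  have himage : (range n).image g = range n :=
    eq_of_subset_of_card_le (fun j hj => by
      obtain ⟨b, hb, rfl⟩ := mem_image.1 hj
      exact mem_range.2 (hg b hb).2) (card_image_of_injOn hinj).ge
  calc ∑ b ∈ range n, f ((c * b + s) % n) = ∑ b ∈ range n, f (g b) :=
        sum_congr rfl fun b hb => by rw [(hg b hb).1]
    _ = ∑ j ∈ (range n).image g, f j := (sum_image (f := fun j : ℕ => f j) hinj).symm
    _ = ∑ j ∈ range n, f j := by rw [himage]

theorem sq_mul_sum_range_ediv {d h : ℕ} (hcop : IsCoprime (d : ℤ) h) (s : ℤ) :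
    h ^ 2 * ∑ b ∈ range h, (d * b + s) / h * (2 * d - 1 - (d * b + s) / h) =
      ∑ b ∈ range h, (h * (2 * d - 1) * (d * b + s) - (d * b + s) ^ 2)
        + (2 * s - h * (2 * d - 1)) * ∑ j ∈ range h, (j : ℤ) + 2 * d * remainderSum d h s
        - ∑ j ∈ range h, (j : ℤ) ^ 2 := by
  have hperm₁ : ∑ b ∈ range h, (d * b + s) % h = ∑ j ∈ range h, (j : ℤ) :=
    sum_range_emod_affine hcop s id
  have hperm₂ : ∑ b ∈ range h, ((d * b + s) % h) ^ 2 = ∑ j ∈ range h, (j : ℤ) ^ 2 :=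
    sum_range_emod_affine hcop s (· ^ 2)
  rw [remainderSum, ← hperm₁, ← hperm₂]
  simp only [mul_sum, ← sum_add_distrib, ← sum_sub_distrib]
  refine sum_congr rfl fun b _ => ?_
  linear_combination (h * (2 * d - 1) - (d * b + s) + (d * b + s) % h - h * ((d * b + s) / h))
    * Int.mul_ediv_add_emod (d * b + s) h

theorem remainderSum_reciprocity {d h : ℕ} (hd : 0 < d) (hh : 0 < h) (hcop : Nat.Coprime d h)
    {s : ℤ} (hs0 : 0 ≤ s) (hs : s < d + h) :
    12 * h ^ 2 * remainderSum h d s + 12 * d ^ 2 * remainderSum d h s =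
      d * h * (d ^ 2 + h ^ 2 + 3 * h * d - 3 * d - 3 * h + 1 - 6 * s * (d + h - 1 - s))
        + 3 * d ^ 2 * h * (h - 1) ^ 2 + 3 * h ^ 2 * d * (d - 1) ^ 2 := by
  have hfloor := remainderSum_eq_sub_ediv h d s
  have hlattice := two_mul_sum_range_mul_ediv hd hh hs0 hs
  have hquad := sq_mul_sum_range_ediv (Nat.isCoprime_iff_coprime.2 hcop) s
  have hpoly : ∑ b ∈ range h, (h * (2 * d - 1) * (d * b + s) - (d * b + s) ^ 2 : ℤ) =
      h * (2 * d - 1) * (d * ∑ b ∈ range h, (b : ℤ) + h * s)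
        - (d ^ 2 * ∑ b ∈ range h, (b : ℤ) ^ 2 + 2 * d * s * ∑ b ∈ range h, (b : ℤ)
          + h * s ^ 2) := by
    rw [show (h * s : ℤ) = ∑ _b ∈ range h, s by simp,
      show (h * s ^ 2 : ℤ) = ∑ _b ∈ range h, s ^ 2 by simp]
    simp only [mul_sum, ← sum_add_distrib, ← sum_sub_distrib]
    exact sum_congr rfl fun b _ => by ring
  have gd1 := sum_range_natCast_mul_two (R := ℤ) d
  have gd2 := sum_range_natCast_sq_mul_six (R := ℤ) d
  have gh1 := sum_range_natCast_mul_two (R := ℤ) h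
  have gh2 := sum_range_natCast_sq_mul_six (R := ℤ) h
  linear_combination 12 * h ^ 2 * hfloor - 6 * d * h ^ 2 * hlattice - 6 * d * hquad
    - 6 * d * hpoly + 2 * h ^ 3 * gd2 + 6 * h ^ 2 * s * gd1
    - 3 * d * (d - 1) * (h * (2 * d - 1) - 2 * s) * gh1 + d * (d ^ 2 + 1) * gh2

theorem phi_reciprocity_general (d h : ℕ) (hh1 : 1 ≤ h) (hcop : Nat.Coprime h d)
    (s : ℤ) (hs0 : 0 ≤ s) (hsd : s < d) :
    phi (h : ℤ) d s =
      ((d : ℂ) ^ 2 + (h : ℂ) ^ 2 + 3 * h * d - 3 * d - 3 * h + 1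
          - 6 * (s : ℂ) * ((d : ℂ) + (h : ℂ) - 1 - (s : ℂ))) / (12 * h)
        - ((d : ℂ) / h) * phi ((d % h : ℕ) : ℤ) h (s % (h : ℤ)) := by
  have hd : 0 < d := by omega
  have hcop' : Nat.Coprime (d % h) h := (ZMod.coprime_mod_iff_coprime d h).2 hcop.symm
  rw [phi_eq_remainderSum _ hd (Nat.isCoprime_iff_coprime.2 hcop),
    phi_eq_remainderSum _ hh1 (Nat.isCoprime_iff_coprime.2 hcop'), Int.natCast_mod,
    remainderSum_emod]
  have key := congrArg (Int.cast : ℤ → ℂ)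
    (remainderSum_reciprocity hd hh1 hcop.symm hs0 (by omega))
  push_cast at key
  have hdC : (d : ℂ) ≠ 0 := Nat.cast_ne_zero.2 hd.ne'
  have hhC : (h : ℂ) ≠ 0 := Nat.cast_ne_zero.2 (by omega)
  field_simp
  linear_combination 4 * key

theorem phi_reciprocity (d h : ℕ) (hh1 : 1 ≤ h) (hhd : h < d) (hcop : Nat.Coprime h d)
    (s : ℤ) (hs0 : 0 ≤ s) (hsd : s < d) :
    phi (h : ℤ) d s =
      ((d : ℂ) ^ 2 + (h : ℂ) ^ 2 + 3 * h * d - 3 * d - 3 * h + 1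
          - 6 * (s : ℂ) * ((d : ℂ) + (h : ℂ) - 1 - (s : ℂ))) / (12 * h)
        - ((d : ℂ) / h) * phi ((d % h : ℕ) : ℤ) h (s % (h : ℤ)) :=
  phi_reciprocity_general d h hh1 hcop s hs0 hsd
end

section
/- Let A be a finite abelian group, σ, ρ ∈ A, d = |⟨σ⟩ ∩ ⟨ρ⟩|, and h ∈ (ℤ/dℤ)× defined by ρ^{o(ρ)/d} = (σ^{o(σ)/d})^h. Then for integers 0 ≤ u < o(σ) and 0 ≤ v < o(ρ), there exists a character χ of A with u_{χ,σ} = u and u_{χ,ρ} = v if and only if v ≡ hu (mod d); and when this congruence holds, the number of such characters is |A|·d/(o(σ)·o(ρ)). -/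
open Finset Subgroup

lemma ee_pow (x : ℝ) (k : ℕ) : ee x ^ k = ee (k * x) := by
  rw [ee, ee, ← Complex.exp_nat_mul]
  congr 1
  push_cast
  ring

lemma ee_natCast_div (a n : ℕ) : ee (a / n) = ee (1 / n) ^ a := by
  rw [ee_pow, mul_one_div]

lemma isPrimitiveRoot_ee_one_div {n : ℕ} (hn : n ≠ 0) : IsPrimitiveRoot (ee (1 / n)) n := by
  convert Complex.isPrimitiveRoot_exp n hn using 2
  rw [ee, Complex.ofReal_div, Complex.ofReal_one, Complex.ofReal_natCast, mul_one_div]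

lemma ee_natCast_div_inj {n a b : ℕ} (ha : a < n) (hb : b < n) :
    ee (a / n) = ee (b / n) ↔ a = b := by
  rw [ee_natCast_div, ee_natCast_div]
  exact ⟨(isPrimitiveRoot_ee_one_div (by omega)).pow_inj ha hb, fun hab => hab ▸ rfl⟩

lemma exists_ee_natCast_div_eq {n : ℕ} [NeZero n] {z : ℂ} (hz : z ^ n = 1) :
    ∃ a < n, ee (a / n) = z := by
  simpa only [ee_natCast_div] using
    (isPrimitiveRoot_ee_one_div (NeZero.ne n)).eq_pow_of_pow_eq_one hz

lemma ee_natCast_div_pow_div {n d : ℕ} (hn : n ≠ 0) (hd : d ∣ n) (a : ℕ) :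
    ee (a / n) ^ (n / d) = ee (a / d) := by
  have hd₀ : (d : ℝ) ≠ 0 := by exact_mod_cast ne_zero_of_dvd_ne_zero hn hd
  rw [ee_pow, Nat.cast_div hd hd₀]
  field_simp

lemma ee_natCast_div_eq_pow_iff_modEq {d : ℕ} (hd : d ≠ 0) (u v h : ℕ) :
    ee (v / d) = ee (u / d) ^ h ↔ v ≡ h * u [MOD d] := by
  have hζ := isPrimitiveRoot_ee_one_div hd
  rw [ee_natCast_div, ee_natCast_div, ← pow_mul, mul_comm u,
    (hζ.isOfFinOrder hd).pow_eq_pow_iff_modEq, ← hζ.eq_orderOf]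

theorem Subgroup.card_sup_mul_card_inf {G : Type*} [Group G] (H K : Subgroup G) [K.Normal] :
    Nat.card ↥(H ⊔ K) * Nat.card ↥(H ⊓ K) = Nat.card H * Nat.card K := by
  have hH := relIndex_mul_relIndex ⊥ (H ⊓ K) H bot_le inf_le_left
  have hK := relIndex_mul_relIndex ⊥ K (H ⊔ K) bot_le le_sup_right
  rw [relIndex_bot_left, relIndex_bot_left, inf_relIndex_left] at hH
  rw [relIndex_bot_left, relIndex_bot_left, relIndex_sup_right] at hK
  rw [← hH, ← hK]
  ring

theorem card_zpowers_sup_zpowers_mul_card_inf {G : Type*} [CommGroup G] (σ ρ : G) :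
    Nat.card ↥(zpowers σ ⊔ zpowers ρ) * Nat.card ↥(zpowers σ ⊓ zpowers ρ) =
      orderOf σ * orderOf ρ := by
  rw [card_sup_mul_card_inf, Nat.card_zpowers, Nat.card_zpowers]

lemma card_zpowers_inf_dvd_orderOf_left {G : Type*} [Group G] (σ ρ : G) :
    Nat.card ↥(zpowers σ ⊓ zpowers ρ) ∣ orderOf σ :=
  Nat.card_zpowers σ ▸ card_dvd_of_le inf_le_left

lemma card_zpowers_inf_dvd_orderOf_right {G : Type*} [Group G] (σ ρ : G) :
    Nat.card ↥(zpowers σ ⊓ zpowers ρ) ∣ orderOf ρ :=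
  Nat.card_zpowers ρ ▸ card_dvd_of_le inf_le_right

theorem card_quotient_zpowers_sup_zpowers {G : Type*} [CommGroup G] [Finite G] (σ ρ : G) :
    Nat.card (G ⧸ zpowers σ ⊔ zpowers ρ) =
      Nat.card G * Nat.card ↥(zpowers σ ⊓ zpowers ρ) / (orderOf σ * orderOf ρ) := by
  rw [(zpowers σ ⊔ zpowers ρ).card_eq_card_quotient_mul_card_subgroup, mul_assoc,
    card_zpowers_sup_zpowers_mul_card_inf,
    Nat.mul_div_cancel _ (Nat.mul_pos (orderOf_pos σ) (orderOf_pos ρ))]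

section evalPair

variable {A M : Type*} [CommGroup A] [CommMonoid M]

def evalPair (σ ρ : A) : (A →* Mˣ) →* Mˣ × Mˣ := (MonoidHom.eval σ).prod (MonoidHom.eval ρ)

@[simp]
lemma evalPair_apply (σ ρ : A) (χ : A →* Mˣ) : evalPair σ ρ χ = (χ σ, χ ρ) := rfl

lemma ker_evalPair (σ ρ : A) :
    (evalPair (M := M) σ ρ).ker = (MonoidHom.domRestrictHom (zpowers σ ⊔ zpowers ρ) Mˣ).ker := by
  ext χ
  rw [MonoidHom.mem_ker, MonoidHom.mem_ker, MonoidHom.domRestrictHom_apply,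
    MonoidHom.domRestrict_eq_one_iff, evalPair_apply, Prod.mk_eq_one]
  simp only [← MonoidHom.mem_ker, ← SetLike.le_def, sup_le_iff, zpowers_le]

variable [Finite A] [HasEnoughRootsOfUnity M (Monoid.exponent A)]

lemma card_ker_evalPair (σ ρ : A) :
    Nat.card (evalPair (M := M) σ ρ).ker = Nat.card (A ⧸ zpowers σ ⊔ zpowers ρ) := by
  rw [ker_evalPair, CommGroup.card_domRestrictHom_ker]

lemma card_range_evalPair (σ ρ : A) :
    Nat.card (evalPair (M := M) σ ρ).range = Nat.card ↥(zpowers σ ⊔ zpowers ρ) := by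
  have hA := (evalPair (M := M) σ ρ).ker.card_eq_card_quotient_mul_card_subgroup
  rw [Nat.card_congr (QuotientGroup.quotientKerEquivRange _).toEquiv, card_ker_evalPair,
    CommGroup.card_monoidHom_of_hasEnoughRootsOfUnity,
    (zpowers σ ⊔ zpowers ρ).card_eq_card_quotient_mul_card_subgroup, mul_comm] at hA
  exact (Nat.eq_of_mul_eq_mul_right Nat.card_pos hA).symm

lemma card_fiber_evalPair (σ ρ : A) (χ₀ : A →* Mˣ) :
    Nat.card {χ : A →* Mˣ // evalPair σ ρ χ = evalPair σ ρ χ₀} =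
      Nat.card (A ⧸ zpowers σ ⊔ zpowers ρ) := by
  rw [← card_ker_evalPair (M := M)]
  exact Nat.card_congr ((evalPair σ ρ).fiberEquivKer χ₀)

end evalPair

def compatibleExponents (n₁ n₂ d h : ℕ) : Finset (ℕ × ℕ) :=
  {p ∈ range n₁ ×ˢ range n₂ | p.2 ≡ h * p.1 [MOD d]}

lemma card_compatibleExponents (n₁ : ℕ) {n₂ d : ℕ} (hd : d ∣ n₂) (hd₀ : 0 < d) (h : ℕ) :
    #(compatibleExponents n₁ n₂ d h) = n₁ * (n₂ / d) := by
  rw [compatibleExponents, card_filter, sum_product]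
  simp only [← card_filter, ← Nat.count_eq_card_filter_range, Nat.count_modEq_card _ hd₀,
    Nat.mod_eq_zero_of_dvd hd, Nat.not_lt_zero, if_false, add_zero, sum_const, card_range,
    smul_eq_mul]

@[simp]
lemma mem_compatibleExponents {n₁ n₂ d h : ℕ} {p : ℕ × ℕ} :
    p ∈ compatibleExponents n₁ n₂ d h ↔ (p.1 < n₁ ∧ p.2 < n₂) ∧ p.2 ≡ h * p.1 [MOD d] := by
  rw [compatibleExponents, mem_filter, mem_product, mem_range, mem_range]

lemma compatibleExponents_subset (n₁ n₂ d h : ℕ) :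
    (compatibleExponents n₁ n₂ d h : Set (ℕ × ℕ)) ⊆ {p | p.1 < n₁ ∧ p.2 < n₂} :=
  fun _ hp => (mem_compatibleExponents.1 hp).1

noncomputable def eeUnit (x : ℝ) : ℂˣ := Units.mk0 (ee x) (Complex.exp_ne_zero _)

@[simp]
lemma val_eeUnit (x : ℝ) : (eeUnit x : ℂ) = ee x := rfl

noncomputable def rootPair (n₁ n₂ : ℕ) (p : ℕ × ℕ) : ℂˣ × ℂˣ :=
  (eeUnit (p.1 / n₁), eeUnit (p.2 / n₂))

lemma rootPair_injOn (n₁ n₂ : ℕ) :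
    Set.InjOn (rootPair n₁ n₂) {p | p.1 < n₁ ∧ p.2 < n₂} := by
  rintro ⟨a, b⟩ ⟨ha, hb⟩ ⟨a', b'⟩ ⟨ha', hb'⟩ hab
  simp only [rootPair, Prod.mk.injEq, Units.ext_iff, val_eeUnit] at hab
  exact Prod.ext ((ee_natCast_div_inj ha ha').1 hab.1) ((ee_natCast_div_inj hb hb').1 hab.2)

lemma evalPair_eq_rootPair_iff {A : Type*} [CommGroup A] (σ ρ : A) (χ : A →* ℂˣ)
    (n₁ n₂ u v : ℕ) : evalPair σ ρ χ = rootPair n₁ n₂ (u, v) ↔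
      (χ σ : ℂ) = ee (u / n₁) ∧ (χ ρ : ℂ) = ee (v / n₂) := by
  simp only [evalPair_apply, rootPair, Prod.mk.injEq, Units.ext_iff, val_eeUnit]

section characters

variable {A : Type*} [CommGroup A] [Finite A]

lemma exists_apply_eq_ee (χ : A →* ℂˣ) (g : A) :
    ∃ a < orderOf g, (χ g : ℂ) = ee (a / orderOf g) := by
  have : NeZero (orderOf g) := ⟨(orderOf_pos g).ne'⟩
  obtain ⟨a, ha, hz⟩ := exists_ee_natCast_div_eq (z := (χ g : ℂ)) (by
    rw [← Units.val_pow_eq_pow_val, ← map_pow, pow_orderOf_eq_one, map_one, Units.val_one])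
  exact ⟨a, ha, hz.symm⟩

variable {σ ρ : A} {d h : ℕ} (hd₁ : d ∣ orderOf σ) (hd₂ : d ∣ orderOf ρ)
  (hh : ρ ^ (orderOf ρ / d) = (σ ^ (orderOf σ / d)) ^ h)
include hd₁ hd₂ hh

lemma modEq_of_apply_eq_ee {χ : A →* ℂˣ} {u v : ℕ} (hσ : (χ σ : ℂ) = ee (u / orderOf σ))
    (hρ : (χ ρ : ℂ) = ee (v / orderOf ρ)) : v ≡ h * u [MOD d] := by
  have hχ := congrArg (fun g => (χ g : ℂ)) hh
  simp only [map_pow, Units.val_pow_eq_pow_val, hσ, hρ,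
    ee_natCast_div_pow_div (orderOf_pos σ).ne' hd₁,
    ee_natCast_div_pow_div (orderOf_pos ρ).ne' hd₂] at hχ
  exact (ee_natCast_div_eq_pow_iff_modEq
    (ne_zero_of_dvd_ne_zero (orderOf_pos σ).ne' hd₁) _ _ _).1 hχ

lemma evalPair_mem_image_compatibleExponents (χ : A →* ℂˣ) :
    evalPair σ ρ χ ∈
      rootPair (orderOf σ) (orderOf ρ) '' compatibleExponents (orderOf σ) (orderOf ρ) d h := by
  obtain ⟨u, hu, hσ⟩ := exists_apply_eq_ee χ σ
  obtain ⟨v, hv, hρ⟩ := exists_apply_eq_ee χ ρ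
  refine ⟨(u, v), ?_, ((evalPair_eq_rootPair_iff σ ρ χ _ _ u v).2 ⟨hσ, hρ⟩).symm⟩
  rw [mem_coe, mem_compatibleExponents]
  exact ⟨⟨hu, hv⟩, modEq_of_apply_eq_ee hd₁ hd₂ hh hσ hρ⟩

end characters

theorem range_evalPair_eq {A : Type*} [CommGroup A] [Finite A] {σ ρ : A} {d h : ℕ}
    (hd : d = Nat.card ↥(zpowers σ ⊓ zpowers ρ))
    (hh : ρ ^ (orderOf ρ / d) = (σ ^ (orderOf σ / d)) ^ h) :
    Set.range (evalPair σ ρ) =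
      rootPair (orderOf σ) (orderOf ρ) '' compatibleExponents (orderOf σ) (orderOf ρ) d h := by
  have hd₁ : d ∣ orderOf σ := hd ▸ card_zpowers_inf_dvd_orderOf_left σ ρ
  have hd₂ : d ∣ orderOf ρ := hd ▸ card_zpowers_inf_dvd_orderOf_right σ ρ
  have hd₀ : 0 < d := hd ▸ Nat.card_pos
  have hrange :
      (Set.range (evalPair (M := ℂ) σ ρ)).ncard = Nat.card ↥(zpowers σ ⊔ zpowers ρ) := by
    rw [← MonoidHom.coe_range, ← Nat.card_coe_set_eq, SetLike.coe_sort_coe, card_range_evalPair]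
  have hH : Nat.card ↥(zpowers σ ⊔ zpowers ρ) = orderOf σ * (orderOf ρ / d) := by
    refine Nat.eq_of_mul_eq_mul_right hd₀ ?_
    rw [hd, card_zpowers_sup_zpowers_mul_card_inf, ← hd, mul_assoc, Nat.div_mul_cancel hd₂]
  refine Set.eq_of_subset_of_ncard_le
    (Set.range_subset_iff.2 (evalPair_mem_image_compatibleExponents hd₁ hd₂ hh)) ?_
  rw [((rootPair_injOn _ _).mono (compatibleExponents_subset _ _ _ _)).ncard_image,
    Set.ncard_coe_finset, card_compatibleExponents _ hd₂ hd₀, hrange, hH]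

theorem characters_with_two_values {A : Type*} [CommGroup A] [Fintype A] (σ ρ : A)
    (d : ℕ) (hd : d = Nat.card ↥(Subgroup.zpowers σ ⊓ Subgroup.zpowers ρ))
    (h : ℕ) (hh : ρ ^ (orderOf ρ / d) = (σ ^ (orderOf σ / d)) ^ h)
    (u v : ℕ) (hu : u < orderOf σ) (hv : v < orderOf ρ) :
    ((∃ χ : A →* ℂˣ, (χ σ : ℂ) = ee ((u : ℝ) / orderOf σ) ∧
        (χ ρ : ℂ) = ee ((v : ℝ) / orderOf ρ)) ↔ v ≡ h * u [MOD d]) ∧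
    (v ≡ h * u [MOD d] →
      Nat.card {χ : A →* ℂˣ // (χ σ : ℂ) = ee ((u : ℝ) / orderOf σ) ∧
          (χ ρ : ℂ) = ee ((v : ℝ) / orderOf ρ)}
        = Fintype.card A * d / (orderOf σ * orderOf ρ)) := by
  simp only [← evalPair_eq_rootPair_iff]
  have hiff : (∃ χ, evalPair σ ρ χ = rootPair (orderOf σ) (orderOf ρ) (u, v)) ↔
      v ≡ h * u [MOD d] := by
    rw [← Set.mem_range, range_evalPair_eq hd hh, (rootPair_injOn _ _).mem_image_iff
      (compatibleExponents_subset _ _ _ _) ⟨hu, hv⟩, mem_coe, mem_compatibleExponents]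
    exact and_iff_right ⟨hu, hv⟩
  refine ⟨hiff, fun huv => ?_⟩
  obtain ⟨χ₀, hχ₀⟩ := hiff.2 huv
  rw [← hχ₀, card_fiber_evalPair, card_quotient_zpowers_sup_zpowers, Nat.card_eq_fintype_card, hd]
end
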